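/- For every integer n ≥ 1, the equality of ideals ⋂_{i=0}^{n-1} J̃_{i,i+1} = ∏_{i=0}^{n-1} J̃_{i,i+1} holds in the quotient ring T_n/J^{(2)}_{0n}. -/

import Mathlib

open scoped TensorProduct
open PiTensorProduct

noncomputable section

variable (R B : Type*) [CommRing R] [CommRing B] [Algebra R B]

/-- The `(n+1)`-fold tensor power `B ⊗_R ⋯ ⊗_R B`, with factors indexed by `Fin (n+1)`. -/
abbrev TT (n : ℕ) : Type _ := ⨂[R] _ : Fin (n + 1), B

/-- `d^{r,s} b = (1 ⊗ ⋯ ⊗ b ⊗ ⋯ ⊗ 1) - (1 ⊗ ⋯ ⊗ b ⊗ ⋯ ⊗ 1)`, with `b` in position `s`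
(resp. `r`) in the two elementary tensors. -/
def dd (n : ℕ) (r s : Fin (n + 1)) (b : B) : TT R B n :=
  tprod R (fun i => if i = s then b else 1) - tprod R (fun i => if i = r then b else 1)

/-- The ideal `J_{rs}` generated by the elements `d^{r,s} b`. -/
def Jrs (n : ℕ) (r s : Fin (n + 1)) : Ideal (TT R B n) :=
  Ideal.span {x | ∃ b : B, x = dd R B n r s b}

/-- The ideal `J^{(2)}_{0n} = Σ_{0 ≤ r < s ≤ n} J_{rs}²`. -/
def Jsq (n : ℕ) : Ideal (TT R B n) :=
  ⨆ (r : Fin (n + 1)) (s : Fin (n + 1)) (_ : r < s), (Jrs R B n r s) ^ 2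

/-- The image `J̃_{rs}` of the ideal `J_{rs}` in the quotient ring `T_n / J^{(2)}_{0n}`. -/
def Jt (n : ℕ) (r s : Fin (n + 1)) : Ideal (TT R B n ⧸ Jsq R B n) :=
  (Jrs R B n r s).map (Ideal.Quotient.mk (Jsq R B n))

/-! ### Abstract lemmas about ideals and a ring endomorphism -/

section Abstract

variable {A : Type*} [CommRing A] (φ : A →+* A) (K : Ideal A)

/-- An ideal `I` is *good* (w.r.t. `φ` and `K`) if `x - φ x ∈ K * I` for all `x ∈ I`. -/
def GoodIdeal (I : Ideal A) : Prop := ∀ x ∈ I, x - φ x ∈ K * I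

theorem GoodIdeal.phi_mem {I : Ideal A} (h : GoodIdeal φ K I) {x : A} (hx : x ∈ I) :
    φ x ∈ I := by
  have h1 : x - φ x ∈ I := Ideal.mul_le_right (h x hx)
  have h2 : φ x = x - (x - φ x) := by ring
  rw [h2]; exact Ideal.sub_mem _ hx h1

theorem goodIdeal_span (hK : ∀ x, x - φ x ∈ K) (S : Set A) (hS : ∀ g ∈ S, φ g = g) :
    GoodIdeal φ K (Ideal.span S) := by
  intro x hx
  induction hx using Submodule.span_induction with
  | mem g hg => rw [hS g hg, sub_self]; exact Ideal.zero_mem _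
  | zero => rw [_root_.map_zero, sub_self]; exact Ideal.zero_mem _
  | add x y hx hy ihx ihy =>
      have h : x + y - φ (x + y) = (x - φ x) + (y - φ y) := by rw [_root_.map_add]; ring
      rw [h]; exact Ideal.add_mem _ ihx ihy
  | smul a x hx ih =>
      have hφx : φ x ∈ Ideal.span S := by
        have h1 : x - φ x ∈ Ideal.span S := Ideal.mul_le_right ih
        have h2 : φ x = x - (x - φ x) := by ring
        rw [h2]; exact Ideal.sub_mem _ hx h1
      have h : a • x - φ (a • x) = a * (x - φ x) + (a - φ a) * φ x := by
        rw [smul_eq_mul, _root_.map_mul]; ring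
      rw [h]
      exact Ideal.add_mem _ (Ideal.mul_mem_left _ _ ih) (Ideal.mul_mem_mul (hK a) hφx)

theorem GoodIdeal.mul {I J : Ideal A} (hI : GoodIdeal φ K I) (hJ : GoodIdeal φ K J) :
    GoodIdeal φ K (I * J) := by
  intro x hx
  refine Submodule.mul_induction_on hx ?_ ?_
  · intro a ha b hb
    have h : a * b - φ (a * b) = (a - φ a) * b + φ a * (b - φ b) := by rw [_root_.map_mul]; ring
    rw [h]
    refine Ideal.add_mem _ ?_ ?_
    · have h1 : (a - φ a) * b ∈ K * I * J := Ideal.mul_mem_mul (hI a ha) hb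
      rwa [mul_assoc] at h1
    · have h2 : φ a * (b - φ b) ∈ I * (K * J) := Ideal.mul_mem_mul (hI.phi_mem φ K ha) (hJ b hb)
      rwa [show I * (K * J) = K * (I * J) by rw [← mul_assoc, mul_comm I K, mul_assoc]] at h2
  · intro x y ihx ihy
    have h : x + y - φ (x + y) = (x - φ x) + (y - φ y) := by rw [_root_.map_add]; ring
    rw [h]; exact Ideal.add_mem _ ihx ihy

theorem goodIdeal_prod (hK : ∀ x, x - φ x ∈ K) {ι : Type*} [DecidableEq ι] (s : Finset ι)
    (F : ι → Ideal A) (h : ∀ i ∈ s, GoodIdeal φ K (F i)) :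
    GoodIdeal φ K (∏ i ∈ s, F i) := by
  induction s using Finset.induction_on with
  | empty =>
      intro x _
      rw [Finset.prod_empty, Ideal.one_eq_top, Ideal.mul_top]
      exact hK x
  | insert _ _ hnot ih =>
      rw [Finset.prod_insert hnot]
      exact GoodIdeal.mul φ K (h _ (Finset.mem_insert_self _ _))
        (ih fun i hi => h i (Finset.mem_insert_of_mem hi))

theorem goodIdeal_inf_le {P : Ideal A} (hP : GoodIdeal φ K P)
    (hkill : ∀ x ∈ K, φ x = 0) : K ⊓ P ≤ K * P := by
  intro x hx
  obtain ⟨hxK, hxP⟩ := Submodule.mem_inf.mp hx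
  have h := hP x hxP
  rwa [hkill x hxK, sub_zero] at h

end Abstract

/-! ### The collapsing endomorphism of the tensor power -/

section Concrete

variable (n : ℕ)

/-- The elementary tensor with `b` in slot `s` and `1` elsewhere. -/
def ee (s : Fin (n + 1)) (b : B) : TT R B n :=
  tprod R (fun i => if i = s then b else 1)

theorem dd_eq (r s : Fin (n + 1)) (b : B) :
    dd R B n r s b = ee R B n s b - ee R B n r b := rfl

theorem ee_eq_singleAlgHom (s : Fin (n + 1)) (b : B) :
    ee R B n s b
      = PiTensorProduct.singleAlgHom (R := R) (A := fun _ : Fin (n + 1) => B) s b := by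
  exact congrArg ⇑(PiTensorProduct.tprod R) (funext fun i => by
    simp [MonoidHom.mulSingle_apply, Pi.mulSingle_apply])

theorem ee_one (s : Fin (n + 1)) : ee R B n s (1 : B) = 1 := by
  rw [ee_eq_singleAlgHom, _root_.map_one]

/-- The index collapsing map: `k+1 ↦ k`, identity elsewhere. -/
def sig (k : Fin n) : Fin (n + 1) → Fin (n + 1) :=
  fun s => if s = k.succ then k.castSucc else s

/-- The algebra endomorphism of `TT R B n` collapsing slots `k` and `k+1`. -/
def fk (k : Fin n) : TT R B n →ₐ[R] TT R B n :=
  PiTensorProduct.liftAlgHom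
    ((MultilinearMap.mkPiAlgebra R (Fin (n + 1)) (TT R B n)).compLinearMap
      (fun i => (PiTensorProduct.singleAlgHom (R := R)
        (A := fun _ : Fin (n + 1) => B) (sig n k i)).toLinearMap))
    (by
      simp only [MultilinearMap.compLinearMap_apply, MultilinearMap.mkPiAlgebra_apply,
        AlgHom.toLinearMap_apply, Pi.one_apply, _root_.map_one, Finset.prod_const_one])
    (by
      intro x y
      simp only [MultilinearMap.compLinearMap_apply, MultilinearMap.mkPiAlgebra_apply,
        AlgHom.toLinearMap_apply, Pi.mul_apply, _root_.map_mul, Finset.prod_mul_distrib])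

theorem fk_tprod (k : Fin n) (b : Fin (n + 1) → B) :
    fk R B n k (tprod R b) = ∏ i, ee R B n (sig n k i) (b i) := by
  unfold fk
  show PiTensorProduct.lift ((MultilinearMap.mkPiAlgebra R (Fin (n + 1)) (TT R B n)).compLinearMap _)
    (tprod R b) = _
  rw [PiTensorProduct.lift.tprod]
  simp only [MultilinearMap.compLinearMap_apply, MultilinearMap.mkPiAlgebra_apply]
  exact Finset.prod_congr rfl fun i _ => (ee_eq_singleAlgHom R B n (sig n k i) (b i)).symm

theorem fk_ee (k : Fin n) (s : Fin (n + 1)) (b : B) :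
    fk R B n k (ee R B n s b) = ee R B n (sig n k s) b := by
  show fk R B n k (tprod R (fun i => if i = s then b else 1)) = _
  rw [fk_tprod]
  rw [Finset.prod_eq_single s]
  · rw [if_pos rfl]
  · intro i _ hne
    rw [if_neg hne, ee_one]
  · intro h; exact absurd (Finset.mem_univ s) h

theorem fk_dd (k : Fin n) (r s : Fin (n + 1)) (b : B) :
    fk R B n k (dd R B n r s b) = dd R B n (sig n k r) (sig n k s) b := by
  rw [dd_eq, _root_.map_sub, fk_ee, fk_ee, dd_eq]

/-! ### Ideal-theoretic facts about `Jrs`, `Jsq` -/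

theorem dd_symm (r s : Fin (n + 1)) (b : B) : dd R B n r s b = -(dd R B n s r b) := by
  rw [dd_eq, dd_eq, neg_sub]

theorem Jrs_symm (r s : Fin (n + 1)) : Jrs R B n r s = Jrs R B n s r := by
  unfold Jrs
  apply le_antisymm <;>
    · rw [Ideal.span_le]
      rintro x ⟨b, rfl⟩
      rw [dd_symm]
      exact neg_mem (Ideal.subset_span ⟨b, rfl⟩)

theorem Jrs_diag (r : Fin (n + 1)) : Jrs R B n r r ≤ ⊥ := by
  rw [Jrs, Ideal.span_le]
  rintro x ⟨b, rfl⟩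
  rw [dd_eq, sub_self]
  exact Ideal.zero_mem _

theorem sq_le_Jsq {r s : Fin (n + 1)} (h : r ≠ s) :
    (Jrs R B n r s) ^ 2 ≤ Jsq R B n := by
  rcases lt_or_gt_of_ne h with h' | h'
  · exact le_iSup_of_le r (le_iSup_of_le s (le_iSup_of_le h' le_rfl))
  · rw [Jrs_symm]
    exact le_iSup_of_le s (le_iSup_of_le r (le_iSup_of_le h' le_rfl))

theorem map_Jrs (k : Fin n) (r s : Fin (n + 1)) :
    (Jrs R B n r s).map (fk R B n k) ≤ Jrs R B n (sig n k r) (sig n k s) := by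
  rw [Jrs, Ideal.map_span]
  apply Ideal.span_mono
  rintro x ⟨y, ⟨b, rfl⟩, rfl⟩
  exact ⟨b, (fk_dd R B n k r s b)⟩

theorem fk_comap (k : Fin n) :
    Jsq R B n ≤ (Jsq R B n).comap (fk R B n k).toRingHom := by
  refine iSup_le fun r => iSup_le fun s => iSup_le fun hrs => ?_
  rw [← Ideal.map_le_iff_le_comap, Ideal.map_pow]
  have hmap : (Jrs R B n r s).map (fk R B n k).toRingHom
      ≤ Jrs R B n (sig n k r) (sig n k s) := map_Jrs R B n k r s
  by_cases hσ : sig n k r = sig n k s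
  · have h1 : (Jrs R B n r s).map (fk R B n k).toRingHom ≤ ⊥ := by
      refine le_trans hmap ?_
      rw [hσ]
      exact Jrs_diag R B n _
    calc ((Jrs R B n r s).map (fk R B n k).toRingHom) ^ 2
        ≤ (Jrs R B n r s).map (fk R B n k).toRingHom := by
          rw [pow_two]; exact Ideal.mul_le_left
      _ ≤ ⊥ := h1
      _ ≤ Jsq R B n := bot_le
  · exact le_trans (Ideal.pow_right_mono hmap 2) (sq_le_Jsq R B n hσ)

/-! ### `x - fk x` lies in `J_{k,k+1}` -/

theorem ee_sub_mem (k : Fin n) (s : Fin (n + 1)) (b : B) :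
    ee R B n s b - fk R B n k (ee R B n s b) ∈ Jrs R B n k.castSucc k.succ := by
  rw [fk_ee]
  by_cases h : s = k.succ
  · subst h
    have hσ : sig n k k.succ = k.castSucc := if_pos rfl
    rw [hσ, ← dd_eq]
    exact Ideal.subset_span ⟨b, rfl⟩
  · have hσ : sig n k s = s := if_neg h
    rw [hσ, sub_self]
    exact Ideal.zero_mem _

theorem mul_sub_mem (k : Fin n) {x y : TT R B n}
    (hx : x - fk R B n k x ∈ Jrs R B n k.castSucc k.succ)
    (hy : y - fk R B n k y ∈ Jrs R B n k.castSucc k.succ) :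
    x * y - fk R B n k (x * y) ∈ Jrs R B n k.castSucc k.succ := by
  have h : x * y - fk R B n k (x * y)
      = x * (y - fk R B n k y) + (x - fk R B n k x) * fk R B n k y := by
    rw [_root_.map_mul]; ring
  rw [h]
  exact Ideal.add_mem _ (Ideal.mul_mem_left _ _ hy) (Ideal.mul_mem_right _ _ hx)

theorem tprod_eq_prod_ee (b : Fin (n + 1) → B) :
    (tprod R b : TT R B n) = ∏ s, ee R B n s (b s) := by
  conv_lhs => rw [← Finset.univ_prod_mulSingle b]
  rw [PiTensorProduct.tprod_prod]
  exact Finset.prod_congr rfl fun s _ =>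
    congrArg ⇑(PiTensorProduct.tprod R) (funext fun i => by simp [Pi.mulSingle_apply])

theorem sub_fk_mem (k : Fin n) (x : TT R B n) :
    x - fk R B n k x ∈ Jrs R B n k.castSucc k.succ := by
  induction x using PiTensorProduct.induction_on with
  | smul_tprod r b =>
      have h : (tprod R b : TT R B n) - fk R B n k (tprod R b)
          ∈ Jrs R B n k.castSucc k.succ := by
        rw [tprod_eq_prod_ee]
        have hgen : ∀ t : Finset (Fin (n + 1)),
            (∏ s ∈ t, ee R B n s (b s)) - fk R B n k (∏ s ∈ t, ee R B n s (b s))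
              ∈ Jrs R B n k.castSucc k.succ := by
          intro t
          induction t using Finset.induction_on with
          | empty =>
              rw [Finset.prod_empty, _root_.map_one, sub_self]
              exact Ideal.zero_mem _
          | insert _ _ hnot ih =>
              rw [Finset.prod_insert hnot]
              exact mul_sub_mem R B n k (ee_sub_mem R B n k _ _) ih
        exact hgen Finset.univ
      rw [_root_.map_smul, ← smul_sub]
      exact Submodule.smul_of_tower_mem _ r h
  | add x y hx hy =>
      have h : x + y - fk R B n k (x + y)
          = (x - fk R B n k x) + (y - fk R B n k y) := by rw [_root_.map_add]; ring
      rw [h]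
      exact Ideal.add_mem _ hx hy

/-! ### Descending to the quotient -/

/-- The endomorphism of the quotient ring induced by `fk`. -/
def phiQ (k : Fin n) : (TT R B n ⧸ Jsq R B n) →+* (TT R B n ⧸ Jsq R B n) :=
  Ideal.quotientMap (Jsq R B n) (fk R B n k).toRingHom (fk_comap R B n k)

theorem phiQ_mk (k : Fin n) (x : TT R B n) :
    phiQ R B n k (Ideal.Quotient.mk (Jsq R B n) x)
      = Ideal.Quotient.mk (Jsq R B n) (fk R B n k x) :=
  Ideal.quotientMap_mk

theorem sub_phiQ_mem (k : Fin n) (x : TT R B n ⧸ Jsq R B n) :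
    x - phiQ R B n k x ∈ Jt R B n k.castSucc k.succ := by
  obtain ⟨y, rfl⟩ := Ideal.Quotient.mk_surjective x
  rw [phiQ_mk, ← _root_.map_sub]
  exact Ideal.mem_map_of_mem _ (sub_fk_mem R B n k y)

theorem sig_castSucc (k : Fin n) : sig n k k.castSucc = k.castSucc :=
  if_neg (Fin.castSucc_lt_succ (i := k)).ne

theorem phiQ_kill (k : Fin n) :
    ∀ x ∈ Jt R B n k.castSucc k.succ, phiQ R B n k x = 0 := by
  have hle : (Jrs R B n k.castSucc k.succ).map (Ideal.Quotient.mk (Jsq R B n))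
      ≤ RingHom.ker (phiQ R B n k) := by
    rw [Ideal.map_le_iff_le_comap, Jrs, Ideal.span_le]
    rintro x ⟨b, rfl⟩
    simp only [SetLike.mem_coe, Ideal.mem_comap, RingHom.mem_ker]
    rw [phiQ_mk, fk_dd, sig_castSucc]
    have h2 : sig n k k.succ = k.castSucc := if_pos rfl
    rw [h2]
    have h0 : dd R B n k.castSucc k.castSucc b = 0 := by rw [dd_eq, sub_self]
    rw [h0, _root_.map_zero]
  intro x hx
  exact RingHom.mem_ker.mp (hle hx)

theorem good_Jt (k j : Fin n) (hjk : j < k) :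
    GoodIdeal (phiQ R B n k) (Jt R B n k.castSucc k.succ)
      (Jt R B n j.castSucc j.succ) := by
  have hmap : Jt R B n j.castSucc j.succ
      = Ideal.span ((Ideal.Quotient.mk (Jsq R B n))
          '' {x | ∃ b : B, x = dd R B n j.castSucc j.succ b}) := by
    rw [Jt, Jrs, Ideal.map_span]
  rw [hmap]
  refine goodIdeal_span _ _ (sub_phiQ_mem R B n k) _ ?_
  rintro g ⟨x, ⟨b, rfl⟩, rfl⟩
  rw [phiQ_mk, fk_dd]
  have hjk' : (j : ℕ) < (k : ℕ) := hjk
  have h1 : sig n k j.castSucc = j.castSucc := by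
    refine if_neg fun hcon => ?_
    have := congrArg Fin.val hcon
    simp only [Fin.coe_castSucc, Fin.val_succ] at this
    omega
  have h2 : sig n k j.succ = j.succ := by
    refine if_neg fun hcon => ?_
    have := congrArg Fin.val hcon
    simp only [Fin.val_succ] at this
    omega
  rw [h1, h2]

theorem key_step (k : Fin n) (s : Finset (Fin n)) (hs : ∀ j ∈ s, j < k) :
    Jt R B n k.castSucc k.succ ⊓ (∏ j ∈ s, Jt R B n j.castSucc j.succ)
      ≤ Jt R B n k.castSucc k.succ * ∏ j ∈ s, Jt R B n j.castSucc j.succ := by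
  refine goodIdeal_inf_le _ _ ?_ (phiQ_kill R B n k)
  exact goodIdeal_prod _ _ (sub_phiQ_mem R B n k) s _
    fun j hj => good_Jt R B n k j (hs j hj)

end Concrete

/-- `⋂_{i=0}^{n-1} J̃_{i,i+1} = ∏_{i=0}^{n-1} J̃_{i,i+1}` in `T_n / J^{(2)}_{0n}`. -/
theorem stmt6 (n : ℕ) (hn : 1 ≤ n) :
    ⨅ i : Fin n, Jt R B n i.castSucc i.succ = ∏ i : Fin n, Jt R B n i.castSucc i.succ := by
  classical
  set F : Fin n → Ideal (TT R B n ⧸ Jsq R B n) :=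
    fun i => Jt R B n i.castSucc i.succ with hF
  have key : ∀ m : ℕ, m ≤ n →
      (Finset.univ.filter fun i : Fin n => (i : ℕ) < m).inf F
        = ∏ i ∈ Finset.univ.filter fun i : Fin n => (i : ℕ) < m, F i := by
    intro m
    induction m with
    | zero => intro _; simp [Ideal.one_eq_top]
    | succ m ih =>
        intro hm
        have hmn : m < n := hm
        have ins : (Finset.univ.filter fun i : Fin n => (i : ℕ) < m + 1)
            = insert ⟨m, hmn⟩ (Finset.univ.filter fun i : Fin n => (i : ℕ) < m) := by
          ext i
          simp only [Finset.mem_filter, Finset.mem_univ, true_and, Finset.mem_insert,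
            Fin.ext_iff]
          omega
        have hnot : (⟨m, hmn⟩ : Fin n)
            ∉ Finset.univ.filter fun i : Fin n => (i : ℕ) < m := by simp
        rw [ins, Finset.inf_insert, Finset.prod_insert hnot, ih (Nat.le_of_lt hmn)]
        refine le_antisymm ?_ Ideal.mul_le_inf
        refine key_step R B n ⟨m, hmn⟩ _ fun j hj => ?_
        simp only [Finset.mem_filter, Finset.mem_univ, true_and] at hj
        exact hj
  have huniv : (Finset.univ.filter fun i : Fin n => (i : ℕ) < n) = Finset.univ := by
    ext i; simp [i.isLt]
  have hkey := key n le_rfl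
  rw [huniv] at hkey
  refine le_antisymm ?_ ?_
  · rw [← hkey]
    exact Finset.le_inf fun j _ => iInf_le F j
  · exact le_iInf fun j => le_trans Ideal.prod_le_inf (Finset.inf_le (Finset.mem_univ j))

end
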